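/- arXiv:1209.0120 — 2 statements merged into one kernel-verified Lean document; each statement's English description precedes it below -/
import Mathlib

section
/- Let 𝔠 be the two-dimensional space of 3×3 complex matrices spanned by C₁ = E₂₂ + E₃₃ (up to normalization the Schmidt matrix of (|11⟩+|22⟩)/√2) and C₂ = E₂₁ + E₃₂. Then every nonzero element of 𝔠 has rank exactly 2, and there do NOT exist a 2×3 matrix V₁ with orthonormal rows and a 3×2 matrix V₂ with orthonormal columns such that V₁ C V₂ = 0 for all C ∈ 𝔠. -/
open Matrix

/-!
A nonzero combination `a C₁ + b C₂` has zero first row and rows `(b, a, 0)`, `(0, b, a)`, which are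
independent, so its rank is 2. For the second claim, `V₁` and `V₂` have rank 2, so some row `v` of
`V₁` has `(v₁, v₂) ≠ 0`; then `v C₂ = (v₁, v₂, 0)` and `v C₁ = (0, v₁, v₂)` are two independent
vectors killed by `V₂`, whereas the left kernel of the rank-2 matrix `V₂` is only a line.
-/

namespace Matrix

theorem rank_le_one_of_eq_zero_off_col {m n K : Type*} [Fintype m] [Fintype n] [Field K]
    (A : Matrix m n K) (j : n) (h : ∀ i, ∀ j' ≠ j, A i j' = 0) : A.rank ≤ 1 := by
  rw [← rank_transpose]
  refine (Aᵀ.rank_le_card_of_support_subset {j} fun j' hj' => ?_).trans_eq (by simp)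
  by_contra hj
  exact hj' (funext fun i => h i j' (by simpa using hj))

variable {m n R : Type*} [Fintype m] [Fintype n] [DecidableEq m] [CommSemiring R]
  [StrongRankCondition R]

theorem card_le_rank_left_of_mul_eq_one {A : Matrix m n R} {B : Matrix n m R} (h : A * B = 1) :
    Fintype.card m ≤ A.rank := by
  simpa [h] using rank_mul_le_left A B

theorem card_le_rank_right_of_mul_eq_one {A : Matrix m n R} {B : Matrix n m R} (h : A * B = 1) :
    Fintype.card m ≤ B.rank := by
  simpa [h] using rank_mul_le_right A B

end Matrix

def shiftPair {K : Type*} [Zero K] (p q : K) : Matrix (Fin 2) (Fin 3) K := !![p, q, 0; 0, p, q]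

def C₁ (K : Type*) [Zero K] [One K] : Matrix (Fin 3) (Fin 3) K := !![0, 0, 0; 0, 1, 0; 0, 0, 1]

def C₂ (K : Type*) [Zero K] [One K] : Matrix (Fin 3) (Fin 3) K := !![0, 0, 0; 1, 0, 0; 0, 1, 0]

section

variable {K : Type*} [Field K]

theorem rank_shiftPair {p q : K} (h : p ≠ 0 ∨ q ≠ 0) : (shiftPair p q).rank = 2 := by
  refine (LinearIndependent.rank_matrix ?_).trans (Fintype.card_fin 2)
  change LinearIndependent K ![![p, q, 0], ![0, p, q]]
  rw [LinearIndependent.pair_iff]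
  intro s t hst
  have h₀ : s = 0 ∨ p = 0 := by simpa using congrFun hst 0
  have h₁ : s * q + t * p = 0 := by simpa using congrFun hst 1
  have h₂ : t = 0 ∨ q = 0 := by simpa using congrFun hst 2
  rcases h with hp | hq
  · obtain rfl : s = 0 := h₀.resolve_right hp
    exact ⟨rfl, by simpa [hp] using h₁⟩
  · obtain rfl : t = 0 := h₂.resolve_right hq
    exact ⟨by simpa [hq] using h₁, rfl⟩

theorem rank_smul_C₁_add_smul_C₂ {a b : K} (h : a ≠ 0 ∨ b ≠ 0) :
    (a • C₁ K + b • C₂ K).rank = 2 := by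
  apply le_antisymm
  · refine ((a • C₁ K + b • C₂ K).rank_le_card_of_support_subset {1, 2} fun i hi => ?_).trans
      Finset.card_le_two
    fin_cases i
    · exact absurd (funext fun j => by fin_cases j <;> simp [C₁, C₂]) hi
    all_goals simp
  · have hsub : (a • C₁ K + b • C₂ K).submatrix ![1, 2] id = shiftPair b a := by
      ext i j; fin_cases i <;> fin_cases j <;> simp [C₁, C₂, shiftPair]
    rw [← rank_shiftPair h.symm, ← hsub]
    exact rank_submatrix_le _ _ _

theorem not_mul_C₁_mul_eq_zero_and_mul_C₂_mul_eq_zero {V₁ : Matrix (Fin 2) (Fin 3) K}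
    {V₂ : Matrix (Fin 3) (Fin 2) K} (h₁ : 2 ≤ V₁.rank) (h₂ : 2 ≤ V₂.rank) :
    ¬ (V₁ * C₁ K * V₂ = 0 ∧ V₁ * C₂ K * V₂ = 0) := by
  rintro ⟨hC₁, hC₂⟩
  obtain ⟨k, hk⟩ : ∃ k, V₁ k 1 ≠ 0 ∨ V₁ k 2 ≠ 0 := by
    by_contra! h
    have := V₁.rank_le_one_of_eq_zero_off_col 0 fun i j hj => by
      fin_cases j
      · exact absurd rfl hj
      · exact (h i).1
      · exact (h i).2
    omega
  set M := fromRows (V₁ * C₂ K) (V₁ * C₁ K)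
  have hM : M.submatrix ![.inl k, .inr k] id = shiftPair (V₁ k 1) (V₁ k 2) := by
    ext i j
    fin_cases i <;> fin_cases j <;> simp [M, C₁, C₂, shiftPair, mul_apply, Fin.sum_univ_three]
  have hM_rank : 2 ≤ M.rank :=
    calc 2 = (shiftPair (V₁ k 1) (V₁ k 2)).rank := (rank_shiftPair hk).symm
      _ ≤ M.rank := hM ▸ rank_submatrix_le _ _ _
  have hMV₂ : M * V₂ = 0 := by
    rw [fromRows_mul, hC₁, hC₂, fromRows_zero]
  have := rank_add_rank_le_card_of_mul_eq_zero hMV₂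
  rw [Fintype.card_fin] at this
  omega

end

/-- For the span of C₁ = E₂₂ + E₃₃ and C₂ = E₂₁ + E₃₂ every nonzero element has
rank 2, and no pair of isometries V₁ (2×3, orthonormal rows) and V₂ (3×2,
orthonormal columns) kills the whole span: no 2⊗2 DFS exists. -/
theorem no_code_for_02_decomposable_space :
    (∀ C ∈ Submodule.span ℂ
        ({!![(0:ℂ),0,0; 0,1,0; 0,0,1], !![(0:ℂ),0,0; 1,0,0; 0,1,0]} :
          Set (Matrix (Fin 3) (Fin 3) ℂ)), C ≠ 0 → C.rank = 2) ∧
    ¬ ∃ (V₁ : Matrix (Fin 2) (Fin 3) ℂ) (V₂ : Matrix (Fin 3) (Fin 2) ℂ),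
        V₁ * V₁ᴴ = 1 ∧ V₂ᴴ * V₂ = 1 ∧
        ∀ C ∈ Submodule.span ℂ
          ({!![(0:ℂ),0,0; 0,1,0; 0,0,1], !![(0:ℂ),0,0; 1,0,0; 0,1,0]} :
            Set (Matrix (Fin 3) (Fin 3) ℂ)), V₁ * C * V₂ = 0 := by
  constructor
  · intro C hC hC₀
    obtain ⟨a, b, rfl⟩ := Submodule.mem_span_pair.mp hC
    refine rank_smul_C₁_add_smul_C₂ (not_and_or.mp fun ⟨ha, hb⟩ => hC₀ ?_)
    simp [ha, hb]
  · rintro ⟨V₁, V₂, hV₁, hV₂, hC⟩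
    exact not_mul_C₁_mul_eq_zero_and_mul_C₂_mul_eq_zero
      (by simpa using card_le_rank_left_of_mul_eq_one hV₁)
      (by simpa using card_le_rank_right_of_mul_eq_one hV₂)
      ⟨hC _ (Submodule.subset_span (.inl rfl)), hC _ (Submodule.subset_span (.inr rfl))⟩
end

section
/- Let 𝔠 be the three-dimensional space of all skew-symmetric 3×3 complex matrices. Then every nonzero element of 𝔠 has rank exactly 2, and there do NOT exist a 2×3 matrix V₁ with orthonormal rows and a 3×2 matrix V₂ with orthonormal columns such that V₁ C V₂ = 0 for all C ∈ 𝔠. -/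
open Matrix


lemma cross_entry (x y z : Fin 3 → ℂ)
    (hx : ∀ i j, x i * y j = x j * y i) (hz : ∀ i j, z i * y j = z j * y i)
    (m n i j : Fin 3) : (x m * z n - x n * z m) * (y i * y j) = 0 := by
  linear_combination (z n * y j) * hx m i - (z m * y j) * hx n i
    + (x i * y m) * hz n j - (x i * y n) * hz m j

lemma cross_zero (x y z d : Fin 3 → ℂ)
    (hx : ∀ i j, x i * y j = x j * y i) (hz : ∀ i j, z i * y j = z j * y i)
    (hB : d 0 * y 0 + d 1 * y 1 + d 2 * y 2 = 1)
    (m n : Fin 3) : x m * z n = x n * z m := by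
  have k := cross_entry x y z hx hz m n
  linear_combination (-(x m * z n - x n * z m) * ((d 0 * y 0 + d 1 * y 1 + d 2 * y 2) + 1)) * hB
    + (d 0 * d 0) * k 0 0 + (d 0 * d 1) * k 0 1 + (d 0 * d 2) * k 0 2
    + (d 1 * d 0) * k 1 0 + (d 1 * d 1) * k 1 1 + (d 1 * d 2) * k 1 2
    + (d 2 * d 0) * k 2 0 + (d 2 * d 1) * k 2 1 + (d 2 * d 2) * k 2 2

theorem skew_rank2 (C : Matrix (Fin 3) (Fin 3) ℂ) (hs : Cᵀ = -C) (hne : C ≠ 0) : C.rank = 2 := by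
  have he : ∀ i j, C j i = -C i j := fun i j => congrFun (congrFun hs i) j
  -- rank ≤ 2
  have hdet : C.det = 0 := by
    have h1 : C.det = (-C).det := by rw [← hs, Matrix.det_transpose]
    rw [Matrix.det_neg] at h1
    simp at h1
    linear_combination h1 / 2
  have hle : C.rank ≤ 2 := by
    obtain ⟨v, hv, hCv⟩ := Matrix.exists_mulVec_eq_zero_iff.mpr hdet
    have h3 := LinearMap.finrank_range_add_finrank_ker C.mulVecLin
    have hpi : Module.finrank ℂ (Fin 3 → ℂ) = 3 := by simp
    rw [hpi] at h3
    have hker : 0 < Module.finrank ℂ (LinearMap.ker C.mulVecLin) := by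
      rw [Module.finrank_pos_iff]
      refine ⟨⟨v, by simpa [Matrix.mulVecLin] using hCv⟩, 0, ?_⟩
      simp [hv]
    have : C.rank = Module.finrank ℂ (LinearMap.range C.mulVecLin) := rfl
    omega
  -- rank ≥ 2
  have key : ∀ (B : Matrix (Fin 2) (Fin 3) ℂ) (D : Matrix (Fin 3) (Fin 2) ℂ),
      (B * C * D).det ≠ 0 → 2 ≤ C.rank := by
    intro B D h
    have h1 : (B * C * D).rank ≤ C.rank :=
      le_trans (Matrix.rank_mul_le_left _ _) (Matrix.rank_mul_le_right _ _)
    have h2 : (B * C * D).rank = 2 := by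
      rw [Matrix.rank_of_isUnit _ ((Matrix.isUnit_iff_isUnit_det _).mpr (isUnit_iff_ne_zero.mpr h))]
      simp
    omega
  have hcases : C 0 1 ≠ 0 ∨ C 0 2 ≠ 0 ∨ C 1 2 ≠ 0 := by
    by_contra hc
    push_neg at hc
    obtain ⟨h1, h2, h3⟩ := hc
    apply hne
    ext i j
    fin_cases i <;> fin_cases j <;> simp
    · linear_combination (he 0 0) / 2
    · exact h1
    · exact h2
    · linear_combination he 0 1 - h1
    · linear_combination (he 1 1) / 2
    · exact h3
    · linear_combination he 0 2 - h2
    · linear_combination he 1 2 - h3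
    · linear_combination (he 2 2) / 2
  have hge : 2 ≤ C.rank := by
    rcases hcases with ha | hb | hc
    · refine key !![(1:ℂ),0,0;0,1,0] !![(1:ℂ),0;0,1;0,0] ?_
      rw [Matrix.det_fin_two]
      simp [Matrix.mul_apply, Matrix.vecMul, dotProduct, Fin.sum_univ_succ]
      intro h
      apply ha
      have hsq : C 0 1 * C 0 1 = 0 := by linear_combination h + C 0 1 * he 0 1 - (C 1 1)/2 * he 0 0
      exact pow_eq_zero_iff (n:=2) (by norm_num) |>.mp (by linear_combination hsq)
    · refine key !![(1:ℂ),0,0;0,0,1] !![(1:ℂ),0;0,0;0,1] ?_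
      rw [Matrix.det_fin_two]
      simp [Matrix.mul_apply, Matrix.vecMul, dotProduct, Fin.sum_univ_succ]
      intro h
      apply hb
      have hsq : C 0 2 * C 0 2 = 0 := by linear_combination h + C 0 2 * he 0 2 - (C 2 2)/2 * he 0 0
      exact pow_eq_zero_iff (n:=2) (by norm_num) |>.mp (by linear_combination hsq)
    · refine key !![(0:ℂ),1,0;0,0,1] !![(0:ℂ),0;1,0;0,1] ?_
      rw [Matrix.det_fin_two]
      simp [Matrix.mul_apply, Matrix.vecMul, dotProduct, Fin.sum_univ_succ]
      intro h
      apply hc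
      have hsq : C 1 2 * C 1 2 = 0 := by linear_combination h + C 1 2 * he 1 2 - (C 2 2)/2 * he 1 1
      exact pow_eq_zero_iff (n:=2) (by norm_num) |>.mp (by linear_combination hsq)
  omega

/-- Every nonzero skew-symmetric 3×3 complex matrix has rank 2, and no pair of
isometries V₁ (2×3, orthonormal rows) and V₂ (3×2, orthonormal columns) kills
all skew-symmetric matrices: no 2⊗2 DFS exists for the SWAP noise. -/
theorem no_code_for_skew_symmetric_space :
    (∀ C : Matrix (Fin 3) (Fin 3) ℂ, Cᵀ = -C → C ≠ 0 → C.rank = 2) ∧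
    ¬ ∃ (V₁ : Matrix (Fin 2) (Fin 3) ℂ) (V₂ : Matrix (Fin 3) (Fin 2) ℂ),
        V₁ * V₁ᴴ = 1 ∧ V₂ᴴ * V₂ = 1 ∧
        ∀ C : Matrix (Fin 3) (Fin 3) ℂ, Cᵀ = -C → V₁ * C * V₂ = 0 := by
  refine ⟨skew_rank2, ?_⟩
  rintro ⟨V₁, V₂, h1, h2, h⟩
  have s1 : (!![(0:ℂ),1,0;-1,0,0;0,0,0])ᵀ = -(!![(0:ℂ),1,0;-1,0,0;0,0,0]) := by
    ext i j; fin_cases i <;> fin_cases j <;> simp [Matrix.vecHead, Matrix.vecTail]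
  have s2 : (!![(0:ℂ),0,1;0,0,0;-1,0,0])ᵀ = -(!![(0:ℂ),0,1;0,0,0;-1,0,0]) := by
    ext i j; fin_cases i <;> fin_cases j <;> simp [Matrix.vecHead, Matrix.vecTail]
  have s3 : (!![(0:ℂ),0,0;0,0,1;0,-1,0])ᵀ = -(!![(0:ℂ),0,0;0,0,1;0,-1,0]) := by
    ext i j; fin_cases i <;> fin_cases j <;> simp [Matrix.vecHead, Matrix.vecTail]
  have e1 : ∀ k l, V₁ k 0 * V₂ 1 l = V₁ k 1 * V₂ 0 l := by
    intro k l
    have := congrFun (congrFun (h _ s1) k) l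
    simp [Matrix.mul_apply, Matrix.vecMul, dotProduct, Fin.sum_univ_succ] at this
    linear_combination this
  have e2 : ∀ k l, V₁ k 0 * V₂ 2 l = V₁ k 2 * V₂ 0 l := by
    intro k l
    have := congrFun (congrFun (h _ s2) k) l
    simp [Matrix.mul_apply, Matrix.vecMul, dotProduct, Fin.sum_univ_succ] at this
    linear_combination this
  have e3 : ∀ k l, V₁ k 1 * V₂ 2 l = V₁ k 2 * V₂ 1 l := by
    intro k l
    have := congrFun (congrFun (h _ s3) k) l
    simp [Matrix.mul_apply, Matrix.vecMul, dotProduct, Fin.sum_univ_succ] at this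
    linear_combination this
  have hx : ∀ i j, V₁ 0 i * V₂ j 0 = V₁ 0 j * V₂ i 0 := by
    intro i j
    fin_cases i <;> fin_cases j <;>
      first
        | rfl
        | exact e1 0 0
        | exact (e1 0 0).symm
        | exact e2 0 0
        | exact (e2 0 0).symm
        | exact e3 0 0
        | exact (e3 0 0).symm
  have hz : ∀ i j, V₁ 1 i * V₂ j 0 = V₁ 1 j * V₂ i 0 := by
    intro i j
    fin_cases i <;> fin_cases j <;>
      first
        | rfl
        | exact e1 1 0
        | exact (e1 1 0).symm
        | exact e2 1 0
        | exact (e2 1 0).symm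
        | exact e3 1 0
        | exact (e3 1 0).symm
  have hB : (starRingEnd ℂ) (V₂ 0 0) * V₂ 0 0 + (starRingEnd ℂ) (V₂ 1 0) * V₂ 1 0
      + (starRingEnd ℂ) (V₂ 2 0) * V₂ 2 0 = 1 := by
    have := congrFun (congrFun h2 0) 0
    simp [Matrix.mul_apply, Matrix.conjTranspose_apply, Fin.sum_univ_succ, Matrix.one_apply] at this
    linear_combination this
  have cz := cross_zero (fun i => V₁ 0 i) (fun i => V₂ i 0) (fun i => V₁ 1 i)
    (fun i => (starRingEnd ℂ) (V₂ i 0)) hx hz hB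
  have hA00 : V₁ 0 0 * (starRingEnd ℂ) (V₁ 0 0) + V₁ 0 1 * (starRingEnd ℂ) (V₁ 0 1)
      + V₁ 0 2 * (starRingEnd ℂ) (V₁ 0 2) = 1 := by
    have := congrFun (congrFun h1 0) 0
    simp [Matrix.mul_apply, Matrix.conjTranspose_apply, Fin.sum_univ_succ, Matrix.one_apply] at this
    linear_combination this
  have hA10 : V₁ 1 0 * (starRingEnd ℂ) (V₁ 0 0) + V₁ 1 1 * (starRingEnd ℂ) (V₁ 0 1)
      + V₁ 1 2 * (starRingEnd ℂ) (V₁ 0 2) = 0 := by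
    have := congrFun (congrFun h1 1) 0
    simp [Matrix.mul_apply, Matrix.conjTranspose_apply, Fin.sum_univ_succ, Matrix.one_apply] at this
    linear_combination this
  have hA11 : V₁ 1 0 * (starRingEnd ℂ) (V₁ 1 0) + V₁ 1 1 * (starRingEnd ℂ) (V₁ 1 1)
      + V₁ 1 2 * (starRingEnd ℂ) (V₁ 1 2) = 1 := by
    have := congrFun (congrFun h1 1) 1
    simp [Matrix.mul_apply, Matrix.conjTranspose_apply, Fin.sum_univ_succ, Matrix.one_apply] at this
    linear_combination this
  have hu1 : ∀ j, V₁ 1 j = 0 := by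
    intro j
    linear_combination (starRingEnd ℂ) (V₁ 0 0) * cz 0 j + (starRingEnd ℂ) (V₁ 0 1) * cz 1 j
      + (starRingEnd ℂ) (V₁ 0 2) * cz 2 j + V₁ 0 j * hA10 - V₁ 1 j * hA00
  rw [hu1 0, hu1 1, hu1 2] at hA11
  simp at hA11
end
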